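/- If the graph G = G(Q,S) contains P_5 as a contraction, then the hypergraph (Q, S) has a 2-colouring. -/

import Mathlib

/-- `W` is an `H`-witness structure of `G`: a family of pairwise disjoint nonempty
connected subsets of `V(G)` covering `V(G)` such that distinct `h₁ h₂` are adjacent in `H`
iff there is an edge of `G` between `W h₁` and `W h₂`. -/
def IsWitnessStructure {V U : Type*} (G : SimpleGraph V) (H : SimpleGraph U)
    (W : U → Set V) : Prop :=
  (∀ h, (W h).Nonempty) ∧
  (∀ h₁ h₂, h₁ ≠ h₂ → Disjoint (W h₁) (W h₂)) ∧
  (⋃ h, W h) = Set.univ ∧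
  (∀ h, (G.induce (W h)).Connected) ∧
  (∀ h₁ h₂, h₁ ≠ h₂ → ((∃ a ∈ W h₁, ∃ b ∈ W h₂, G.Adj a b) ↔ H.Adj h₁ h₂))

/-- `G` contains `H` as a contraction. -/
def ContainsAsContraction {V U : Type*} (G : SimpleGraph V) (H : SimpleGraph U) : Prop :=
  ∃ W : U → Set V, IsWitnessStructure G H W

/-- Raw vertex names for the graph `G(Q,S)`: elements `q_i`, hyperedges `S_j`,
copies `S_j'`, subdivision vertices `q^i_j`, and special vertices `q*`, `u₁`, `u₂`, `v`, `w`. -/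
inductive HVertex (m n : ℕ) : Type
  | elt : Fin m → HVertex m n
  | hyp : Fin n → HVertex m n
  | copy : Fin n → HVertex m n
  | sub : Fin m → Fin n → HVertex m n
  | qstar : HVertex m n
  | u1 : HVertex m n
  | u2 : HVertex m n
  | v : HVertex m n
  | w : HVertex m n

/-- A raw vertex name is an actual vertex of `G(Q,S)`: the subdivision vertex `q^i_j`
exists only when `q_i ∈ S_j`. -/
def HVertex.OK {m n : ℕ} (S : Fin n → Set (Fin m)) : HVertex m n → Prop
  | .sub i j => i ∈ S j
  | _ => True

/-- The vertex set of `G(Q,S)`. -/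
def GVertex {m n : ℕ} (S : Fin n → Set (Fin m)) : Type := {x : HVertex m n // x.OK S}

/-- The (asymmetrically listed) edges of `G(Q,S)`:
`q^i_j q_i`, `q^i_j S_j`, `q_i S_j'` (for `q_i ∈ S_j`), `S_j S_k'` (all `j,k`),
`q* u₁`, `q* u₂`, `q* q^i_j`, `u₁ S_j`, `u₂ S_j`, `u₁ v`, `u₂ v`, `w S_j'`. -/
def baseAdj {m n : ℕ} (S : Fin n → Set (Fin m)) : HVertex m n → HVertex m n → Prop
  | .sub i _, .elt i' => i = i'
  | .sub _ j, .hyp j' => j = j'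
  | .elt i, .copy j => i ∈ S j
  | .hyp _, .copy _ => True
  | .qstar, .u1 => True
  | .qstar, .u2 => True
  | .qstar, .sub _ _ => True
  | .u1, .hyp _ => True
  | .u2, .hyp _ => True
  | .u1, .v => True
  | .u2, .v => True
  | .w, .copy _ => True
  | _, _ => False

/-- The graph `G = G(Q,S)`. -/
def GQS {m n : ℕ} (S : Fin n → Set (Fin m)) : SimpleGraph (GVertex S) :=
  SimpleGraph.fromRel (fun a b => baseAdj S a.1 b.1)

/-- `(Q₁, Q₂)` is a 2-colouring of the hypergraph `(Q, S)`: a partition of `Q` such that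
every hyperedge meets both parts. -/
def IsTwoColouring {m n : ℕ} (S : Fin n → Set (Fin m)) (Q₁ Q₂ : Set (Fin m)) : Prop :=
  Q₁ ∪ Q₂ = Set.univ ∧ Disjoint Q₁ Q₂ ∧ ∀ j, (Q₁ ∩ S j).Nonempty ∧ (Q₂ ∩ S j).Nonempty


/-!
Record for each vertex the index `ℓ x ∈ {0, …, 4}` of the witness set containing it: adjacent
vertices have levels differing by at most one, and every level set induces a connected subgraph.
Vertices at levels 0 and 4 are at distance at least four, and since `S_n = Q` the only such pairs
in `G(Q,S)` are `{v, w}`, `{v, q_i}` and `{w, q*}`; reversing the levels, `v` or `w` is at level 0.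

* `v` and `w` at the ends: the `S_j` are at level 2, the `S_j'` at level 3, and connectivity of
  level 1 puts `q*` there. Inside level 2, `S_j` can reach another `S_k` only through some
  `q^i_j` whose `q_i` lies at level 2; inside level 3, `S_j'` needs a neighbour `q_i` at level 3.
  Splitting `Q` at level 2 is therefore a 2-colouring.
* `v` and `q_i` at the ends: `u₁, u₂` are at level 1 while `q*` and all `S_j` are at level 2, so
  `u₁` is cut off from `u₂` inside level 1.
* `w` and `q*` at the ends: all `S_j` are at level 2 and none of their neighbours is, so `S_j` is
  cut off from `S_k` inside level 2.
-/

open SimpleGraph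

section Layering

variable {V : Type*} {G : SimpleGraph V}

structure IsLayering (G : SimpleGraph V) (ℓ : V → ℕ) (d : ℕ) : Prop where
  le : ∀ x, ℓ x ≤ d
  adj_le : ∀ {a b}, G.Adj a b → ℓ a ≤ ℓ b + 1
  connected : ∀ k ≤ d, (G.induce {x | ℓ x = k}).Connected

theorem ContainsAsContraction.exists_isLayering {d : ℕ}
    (h : ContainsAsContraction G (pathGraph (d + 1))) : ∃ ℓ : V → ℕ, IsLayering G ℓ d := by
  obtain ⟨W, -, hdisj, hcov, hconn, hadj⟩ := h
  choose π hπ using Set.iUnion_eq_univ_iff.1 hcov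
  have hmem : ∀ x k, x ∈ W k ↔ π x = k := fun x k =>
    ⟨fun hk => by_contra fun hne => Set.disjoint_left.1 (hdisj _ _ hne) (hπ x) hk,
      fun h => h ▸ hπ x⟩
  refine ⟨fun x => π x, fun x => Nat.lt_succ_iff.1 (π x).isLt, fun {a b} hab => ?_, fun k hk => ?_⟩
  · by_cases he : π a = π b
    · simp [he]
    · have := pathGraph_adj.1 ((hadj _ _ he).1 ⟨a, hπ a, b, hπ b, hab⟩)
      omega
  · have hW : {x | (π x : ℕ) = k} = W ⟨k, by omega⟩ := by
      ext x; simp [hmem, Fin.ext_iff]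
    rw [hW]
    exact hconn _

namespace IsLayering

variable {ℓ : V → ℕ} {d : ℕ}

theorem reverse (hℓ : IsLayering G ℓ d) : IsLayering G (fun x => d - ℓ x) d where
  le _ := Nat.sub_le _ _
  adj_le h := by have := hℓ.adj_le h.symm; have := hℓ.le; omega
  connected k hk := by
    have hlayer : {x | d - ℓ x = k} = {x | ℓ x = d - k} := by
      ext x; have := hℓ.le x; change d - ℓ x = k ↔ ℓ x = d - k; omega
    rw [hlayer]
    exact hℓ.connected _ (Nat.sub_le _ _)

theorem le_add_length (hℓ : IsLayering G ℓ d) {x y : V} (p : G.Walk x y) :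
    ℓ y ≤ ℓ x + p.length := by
  induction p with
  | nil => simp
  | cons h _ ih => have := hℓ.adj_le h.symm; rw [Walk.length_cons]; omega

theorem le_edist (hℓ : IsLayering G ℓ d) {x y : V} (hx : ℓ x = 0) (hy : ℓ y = d) :
    (d : ℕ∞) ≤ G.edist x y := by
  rcases eq_or_ne (G.edist x y) ⊤ with h | h
  · simp [h]
  obtain ⟨p, hp⟩ := exists_walk_of_edist_ne_top h
  have := hℓ.le_add_length p
  rw [← hp]
  exact_mod_cast (by omega : d ≤ p.length)

theorem mem_of_forall_adj (hℓ : IsLayering G ℓ d) {A : Set V} {x y : V}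
    (hA : ∀ a b, a ∈ A → ℓ a = ℓ x → G.Adj a b → ℓ b = ℓ x → b ∈ A)
    (hxA : x ∈ A) (hy : ℓ y = ℓ x) : y ∈ A := by
  obtain ⟨p⟩ := (hℓ.connected (ℓ x) (hℓ.le x)).preconnected ⟨x, rfl⟩ ⟨y, hy⟩
  suffices ∀ a b (p : (G.induce {z | ℓ z = ℓ x}).Walk a b), a.1 ∈ A → b.1 ∈ A from this _ _ p hxA
  intro a b p
  induction p with
  | nil => exact id
  | @cons u v _ h _ ih => exact fun ha => ih (hA _ _ ha u.2 h v.2)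

theorem eq_of_forall_adj_ne (hℓ : IsLayering G ℓ d) {x y : V}
    (hx : ∀ b, G.Adj x b → ℓ b ≠ ℓ x) (hy : ℓ y = ℓ x) : y = x :=
  hℓ.mem_of_forall_adj (A := {x})
    (fun a b ha _ hab hb => absurd hb (by rw [Set.mem_singleton_iff.1 ha] at hab; exact hx b hab))
    rfl hy

end IsLayering

end Layering

section Edist

variable {V : Type*} {G : SimpleGraph V} {a b c d : V}

theorem edist_le_three_of_adj (h : G.Adj a b) : G.edist a b ≤ 3 :=
  (G.edist_le h.toWalk).trans (by norm_num)

theorem edist_le_three_of_adj₂ (h₁ : G.Adj a b) (h₂ : G.Adj b c) : G.edist a c ≤ 3 :=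
  (G.edist_le (.cons h₁ h₂.toWalk)).trans (by norm_num)

theorem edist_le_three_of_adj₃ (h₁ : G.Adj a b) (h₂ : G.Adj b c) (h₃ : G.Adj c d) :
    G.edist a d ≤ 3 :=
  (G.edist_le (.cons h₁ (.cons h₂ h₃.toWalk))).trans (by norm_num)

end Edist

namespace GQS

variable {m n : ℕ} {S : Fin n → Set (Fin m)}

def elt (i : Fin m) : GVertex S := ⟨.elt i, trivial⟩
def hyp (j : Fin n) : GVertex S := ⟨.hyp j, trivial⟩
def copy (j : Fin n) : GVertex S := ⟨.copy j, trivial⟩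
def sub {i : Fin m} {j : Fin n} (h : i ∈ S j) : GVertex S := ⟨.sub i j, h⟩
def qstar : GVertex S := ⟨.qstar, trivial⟩
def u1 : GVertex S := ⟨.u1, trivial⟩
def u2 : GVertex S := ⟨.u2, trivial⟩
def v : GVertex S := ⟨.v, trivial⟩
def w : GVertex S := ⟨.w, trivial⟩

@[simp] theorem val_elt (i : Fin m) : (elt i : GVertex S).1 = .elt i := rfl
@[simp] theorem val_hyp (j : Fin n) : (hyp j : GVertex S).1 = .hyp j := rfl
@[simp] theorem val_copy (j : Fin n) : (copy j : GVertex S).1 = .copy j := rfl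
@[simp] theorem val_sub {i : Fin m} {j : Fin n} (h : i ∈ S j) : (sub h).1 = .sub i j := rfl
@[simp] theorem val_qstar : (qstar : GVertex S).1 = .qstar := rfl
@[simp] theorem val_u1 : (u1 : GVertex S).1 = .u1 := rfl
@[simp] theorem val_u2 : (u2 : GVertex S).1 = .u2 := rfl
@[simp] theorem val_v : (v : GVertex S).1 = .v := rfl
@[simp] theorem val_w : (w : GVertex S).1 = .w := rfl

theorem ext_iff {a b : GVertex S} : a = b ↔ a.1 = b.1 := Subtype.ext_iff

theorem vertex_cases (z : GVertex S) :
    (∃ i, z = elt i) ∨ (∃ j, z = hyp j) ∨ (∃ k, z = copy k) ∨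
      (∃ i j, ∃ h : i ∈ S j, z = sub h) ∨ z = qstar ∨ z = u1 ∨ z = u2 ∨ z = v ∨ z = w := by
  simp only [ext_iff]
  have hz := z.2
  generalize z.1 = c at hz ⊢
  cases c <;> simp_all [HVertex.OK]

theorem adj_iff {a b : GVertex S} :
    (GQS S).Adj a b ↔ a.1 ≠ b.1 ∧ (baseAdj S a.1 b.1 ∨ baseAdj S b.1 a.1) :=
  (fromRel_adj _ _ _).trans (and_congr_left' ext_iff.not)

theorem sub_adj_elt {i : Fin m} {j : Fin n} (h : i ∈ S j) : (GQS S).Adj (sub h) (elt i) := by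
  simp [adj_iff, baseAdj]

theorem sub_adj_hyp {i : Fin m} {j : Fin n} (h : i ∈ S j) : (GQS S).Adj (sub h) (hyp j) := by
  simp [adj_iff, baseAdj]

theorem elt_adj_copy {i : Fin m} {j : Fin n} (h : i ∈ S j) : (GQS S).Adj (elt i) (copy j) := by
  simp [adj_iff, baseAdj, h]

theorem hyp_adj_copy (j k : Fin n) : (GQS S).Adj (hyp j) (copy k) := by
  simp [adj_iff, baseAdj]

theorem qstar_adj_u1 : (GQS S).Adj qstar u1 := by
  simp [adj_iff, baseAdj]

theorem qstar_adj_u2 : (GQS S).Adj qstar u2 := by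
  simp [adj_iff, baseAdj]

theorem qstar_adj_sub {i : Fin m} {j : Fin n} (h : i ∈ S j) : (GQS S).Adj qstar (sub h) := by
  simp [adj_iff, baseAdj]

theorem u1_adj_hyp (j : Fin n) : (GQS S).Adj u1 (hyp j) := by
  simp [adj_iff, baseAdj]

theorem u2_adj_hyp (j : Fin n) : (GQS S).Adj u2 (hyp j) := by
  simp [adj_iff, baseAdj]

theorem u1_adj_v : (GQS S).Adj u1 v := by
  simp [adj_iff, baseAdj]

theorem u2_adj_v : (GQS S).Adj u2 v := by
  simp [adj_iff, baseAdj]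

theorem w_adj_copy (k : Fin n) : (GQS S).Adj w (copy k) := by
  simp [adj_iff, baseAdj]

theorem u1_adj_iff {z : GVertex S} : (GQS S).Adj u1 z ↔ z = v ∨ z = qstar ∨ ∃ j, z = hyp j := by
  simp only [adj_iff, ext_iff]
  have hz := z.2
  generalize z.1 = c at hz ⊢
  cases c <;> simp_all [baseAdj]

theorem hyp_adj_iff {j : Fin n} {z : GVertex S} : (GQS S).Adj (hyp j) z ↔
    z = u1 ∨ z = u2 ∨ (∃ k, z = copy k) ∨ ∃ i, ∃ h : i ∈ S j, z = sub h := by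
  simp only [adj_iff, ext_iff]
  have hz := z.2
  generalize z.1 = c at hz ⊢
  cases c <;> simp_all [baseAdj, HVertex.OK]
  rintro rfl
  exact hz

theorem copy_adj_iff {k : Fin n} {z : GVertex S} : (GQS S).Adj (copy k) z ↔
    (∃ i ∈ S k, z = elt i) ∨ (∃ j, z = hyp j) ∨ z = w := by
  simp only [adj_iff, ext_iff]
  have hz := z.2
  generalize z.1 = c at hz ⊢
  cases c <;> simp_all [baseAdj]

theorem sub_adj_iff {i : Fin m} {j : Fin n} {h : i ∈ S j} {z : GVertex S} :
    (GQS S).Adj (sub h) z ↔ z = elt i ∨ z = hyp j ∨ z = qstar := by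
  simp only [adj_iff, ext_iff]
  have hz := z.2
  generalize z.1 = c at hz ⊢
  cases c <;> simp_all [baseAdj, eq_comm]

def IsPeripheral (x : GVertex S) : Prop :=
  x = v ∨ x = w ∨ x = qstar ∨ ∃ i, x = elt i

theorem edist_le_three_of_not_isPeripheral {J : Fin n} (hJ : S J = Set.univ) {c : GVertex S}
    (hc : ¬ IsPeripheral c) (z : GVertex S) : (GQS S).edist c z ≤ 3 := by
  have hJ := Set.eq_univ_iff_forall.1 hJ
  simp only [IsPeripheral, not_or, not_exists] at hc
  rcases vertex_cases c with ⟨i, rfl⟩ | ⟨j, rfl⟩ | ⟨k, rfl⟩ | ⟨i, j, h, rfl⟩ | rfl | rfl | rfl | rfl | rfl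
  · exact absurd rfl (hc.2.2.2 i)
  · rcases vertex_cases z with
      ⟨i', rfl⟩ | ⟨j', rfl⟩ | ⟨k, rfl⟩ | ⟨i', j', h', rfl⟩ | rfl | rfl | rfl | rfl | rfl
    exacts [edist_le_three_of_adj₂ (hyp_adj_copy j J) (elt_adj_copy (hJ i')).symm,
      edist_le_three_of_adj₂ (hyp_adj_copy j J) (hyp_adj_copy j' J).symm,
      edist_le_three_of_adj (hyp_adj_copy j k),
      edist_le_three_of_adj₃ (u1_adj_hyp j).symm qstar_adj_u1.symm (qstar_adj_sub h'),
      edist_le_three_of_adj₂ (u1_adj_hyp j).symm qstar_adj_u1.symm,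
      edist_le_three_of_adj (u1_adj_hyp j).symm,
      edist_le_three_of_adj (u2_adj_hyp j).symm,
      edist_le_three_of_adj₂ (u1_adj_hyp j).symm u1_adj_v,
      edist_le_three_of_adj₂ (hyp_adj_copy j J) (w_adj_copy J).symm]
  · rcases vertex_cases z with
      ⟨i', rfl⟩ | ⟨j', rfl⟩ | ⟨k', rfl⟩ | ⟨i', j', h', rfl⟩ | rfl | rfl | rfl | rfl | rfl
    exacts [edist_le_three_of_adj₃ (hyp_adj_copy J k).symm (hyp_adj_copy J J)
        (elt_adj_copy (hJ i')).symm,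
      edist_le_three_of_adj (hyp_adj_copy j' k).symm,
      edist_le_three_of_adj₂ (hyp_adj_copy J k).symm (hyp_adj_copy J k'),
      edist_le_three_of_adj₂ (hyp_adj_copy j' k).symm (sub_adj_hyp h').symm,
      edist_le_three_of_adj₃ (hyp_adj_copy J k).symm (u1_adj_hyp J).symm qstar_adj_u1.symm,
      edist_le_three_of_adj₂ (hyp_adj_copy J k).symm (u1_adj_hyp J).symm,
      edist_le_three_of_adj₂ (hyp_adj_copy J k).symm (u2_adj_hyp J).symm,
      edist_le_three_of_adj₃ (hyp_adj_copy J k).symm (u1_adj_hyp J).symm u1_adj_v,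
      edist_le_three_of_adj (w_adj_copy k).symm]
  · rcases vertex_cases z with
      ⟨i', rfl⟩ | ⟨j', rfl⟩ | ⟨k, rfl⟩ | ⟨i', j', h', rfl⟩ | rfl | rfl | rfl | rfl | rfl
    exacts [edist_le_three_of_adj₃ (sub_adj_elt h) (elt_adj_copy (hJ i))
        (elt_adj_copy (hJ i')).symm,
      edist_le_three_of_adj₃ (sub_adj_hyp h) (hyp_adj_copy j J) (hyp_adj_copy j' J).symm,
      edist_le_three_of_adj₂ (sub_adj_hyp h) (hyp_adj_copy j k),
      edist_le_three_of_adj₂ (qstar_adj_sub h).symm (qstar_adj_sub h'),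
      edist_le_three_of_adj (qstar_adj_sub h).symm,
      edist_le_three_of_adj₂ (qstar_adj_sub h).symm qstar_adj_u1,
      edist_le_three_of_adj₂ (qstar_adj_sub h).symm qstar_adj_u2,
      edist_le_three_of_adj₃ (qstar_adj_sub h).symm qstar_adj_u1 u1_adj_v,
      edist_le_three_of_adj₃ (sub_adj_hyp h) (hyp_adj_copy j J) (w_adj_copy J).symm]
  · exact absurd rfl hc.2.2.1
  · rcases vertex_cases z with
      ⟨i, rfl⟩ | ⟨j, rfl⟩ | ⟨k, rfl⟩ | ⟨i, j, h, rfl⟩ | rfl | rfl | rfl | rfl | rfl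
    exacts [edist_le_three_of_adj₃ (u1_adj_hyp J) (sub_adj_hyp (hJ i)).symm (sub_adj_elt (hJ i)),
      edist_le_three_of_adj (u1_adj_hyp j),
      edist_le_three_of_adj₂ (u1_adj_hyp J) (hyp_adj_copy J k),
      edist_le_three_of_adj₂ qstar_adj_u1.symm (qstar_adj_sub h),
      edist_le_three_of_adj qstar_adj_u1.symm,
      by simp,
      edist_le_three_of_adj₂ qstar_adj_u1.symm qstar_adj_u2,
      edist_le_three_of_adj u1_adj_v,
      edist_le_three_of_adj₃ (u1_adj_hyp J) (hyp_adj_copy J J) (w_adj_copy J).symm]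
  · rcases vertex_cases z with
      ⟨i, rfl⟩ | ⟨j, rfl⟩ | ⟨k, rfl⟩ | ⟨i, j, h, rfl⟩ | rfl | rfl | rfl | rfl | rfl
    exacts [edist_le_three_of_adj₃ (u2_adj_hyp J) (sub_adj_hyp (hJ i)).symm (sub_adj_elt (hJ i)),
      edist_le_three_of_adj (u2_adj_hyp j),
      edist_le_three_of_adj₂ (u2_adj_hyp J) (hyp_adj_copy J k),
      edist_le_three_of_adj₂ qstar_adj_u2.symm (qstar_adj_sub h),
      edist_le_three_of_adj qstar_adj_u2.symm,
      edist_le_three_of_adj₂ qstar_adj_u2.symm qstar_adj_u1,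
      by simp,
      edist_le_three_of_adj u2_adj_v,
      edist_le_three_of_adj₃ (u2_adj_hyp J) (hyp_adj_copy J J) (w_adj_copy J).symm]
  · exact absurd rfl hc.1
  · exact absurd rfl hc.2.1

theorem eq_of_four_le_edist {J : Fin n} (hJ : S J = Set.univ) {x y : GVertex S}
    (h : 4 ≤ (GQS S).edist x y) :
    (x = v ∧ y = w) ∨ (x = w ∧ y = v) ∨ (x = v ∧ ∃ i, y = elt i) ∨ ((∃ i, x = elt i) ∧ y = v) ∨
      (x = w ∧ y = qstar) ∨ (x = qstar ∧ y = w) := by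
  have near : ¬ (GQS S).edist x y ≤ 3 := fun h' => absurd (h.trans h') (by norm_num)
  have hx : IsPeripheral x := by_contra fun hx => near (edist_le_three_of_not_isPeripheral hJ hx y)
  have hy : IsPeripheral y := by_contra fun hy =>
    near ((GQS S).edist_comm.trans_le (edist_le_three_of_not_isPeripheral hJ hy x))
  have hJ := Set.eq_univ_iff_forall.1 hJ
  rcases hx with rfl | rfl | rfl | ⟨i, rfl⟩ <;> rcases hy with rfl | rfl | rfl | ⟨i', rfl⟩
  · exact absurd (by simp) near
  · exact Or.inl ⟨rfl, rfl⟩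
  · exact absurd (edist_le_three_of_adj₂ u1_adj_v.symm qstar_adj_u1.symm) near
  · exact Or.inr (Or.inr (Or.inl ⟨rfl, i', rfl⟩))
  · exact Or.inr (Or.inl ⟨rfl, rfl⟩)
  · exact absurd (by simp) near
  · exact Or.inr (Or.inr (Or.inr (Or.inr (Or.inl ⟨rfl, rfl⟩))))
  · exact absurd (edist_le_three_of_adj₂ (w_adj_copy J) (elt_adj_copy (hJ i')).symm) near
  · exact absurd (edist_le_three_of_adj₂ qstar_adj_u1 u1_adj_v) near
  · exact Or.inr (Or.inr (Or.inr (Or.inr (Or.inr ⟨rfl, rfl⟩))))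
  · exact absurd (by simp) near
  · exact absurd (edist_le_three_of_adj₂ (qstar_adj_sub (hJ i')) (sub_adj_elt (hJ i'))) near
  · exact Or.inr (Or.inr (Or.inr (Or.inl ⟨⟨i, rfl⟩, rfl⟩)))
  · exact absurd (edist_le_three_of_adj₂ (elt_adj_copy (hJ i)) (w_adj_copy J).symm) near
  · exact absurd (edist_le_three_of_adj₂ (sub_adj_elt (hJ i)).symm (qstar_adj_sub (hJ i)).symm) near
  · exact absurd (edist_le_three_of_adj₂ (elt_adj_copy (hJ i)) (elt_adj_copy (hJ i')).symm) near

variable {ℓ : GVertex S → ℕ} {d : ℕ}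

theorem level_qstar_eq (hℓ : IsLayering (GQS S) ℓ d) {k : ℕ} (hu1 : ℓ u1 = k) (hu2 : ℓ u2 = k)
    (hv : ℓ v ≠ k) (hH : ∀ j, ℓ (hyp j) ≠ k) : ℓ qstar = k := by
  by_contra hq
  have h := hℓ.eq_of_forall_adj_ne (x := u1) (y := u2) (fun b hb => ?_) (hu2.trans hu1.symm)
  · simp [ext_iff] at h
  · rw [hu1]
    rcases u1_adj_iff.1 hb with rfl | rfl | ⟨j, rfl⟩
    exacts [hv, hq, hH j]

theorem exists_level_elt_eq_level_hyp (hℓ : IsLayering (GQS S) ℓ d) {j k : Fin n} (hk : k ≠ j)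
    (hHk : ℓ (hyp k) = ℓ (hyp j)) (hq : ℓ qstar ≠ ℓ (hyp j)) (hu1 : ℓ u1 ≠ ℓ (hyp j))
    (hu2 : ℓ u2 ≠ ℓ (hyp j)) (hC : ∀ k, ℓ (copy k) ≠ ℓ (hyp j)) :
    ∃ i ∈ S j, ℓ (elt i) = ℓ (hyp j) := by
  by_contra! he
  have h := hℓ.mem_of_forall_adj (A := {z | z = hyp j ∨ ∃ i, ∃ h : i ∈ S j, z = sub h})
    ?_ (Or.inl rfl) hHk
  · simp [ext_iff, hk] at h
  · rintro a b (rfl | ⟨i, h, rfl⟩) - hab hb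
    · rcases hyp_adj_iff.1 hab with rfl | rfl | ⟨k, rfl⟩ | ⟨i, h, rfl⟩
      exacts [absurd hb hu1, absurd hb hu2, absurd hb (hC k), Or.inr ⟨i, h, rfl⟩]
    · rcases sub_adj_iff.1 hab with rfl | rfl | rfl
      exacts [absurd hb (he i h), Or.inl rfl, absurd hb hq]

theorem exists_level_elt_eq_level_copy (hℓ : IsLayering (GQS S) ℓ d) {j k : Fin n} (hk : k ≠ j)
    (hCk : ℓ (copy k) = ℓ (copy j)) (hH : ∀ j', ℓ (hyp j') ≠ ℓ (copy j))
    (hw : ℓ w ≠ ℓ (copy j)) : ∃ i ∈ S j, ℓ (elt i) = ℓ (copy j) := by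
  by_contra! he
  have h := hℓ.eq_of_forall_adj_ne (fun b hb => ?_) hCk
  · exact hk (by simpa [ext_iff] using h)
  · rcases copy_adj_iff.1 hb with ⟨i, hi, rfl⟩ | ⟨j', rfl⟩ | rfl
    exacts [he i hi, hH j', hw]

theorem exists_isTwoColouring_of_isLayering [Nontrivial (Fin n)] (hℓ : IsLayering (GQS S) ℓ d)
    (hv : ℓ v = 0) (hw : ℓ w = 4) : ∃ Q₁ Q₂ : Set (Fin m), IsTwoColouring S Q₁ Q₂ := by
  have hH : ∀ j, ℓ (hyp j) = 2 := fun j => by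
    have := hℓ.adj_le (u1_adj_hyp j).symm; have := hℓ.adj_le u1_adj_v
    have := hℓ.adj_le (hyp_adj_copy j j).symm; have := hℓ.adj_le (w_adj_copy j)
    omega
  have hC : ∀ k, ℓ (copy k) = 3 := fun k => by
    have := hH k; have := hℓ.adj_le (hyp_adj_copy k k).symm; have := hℓ.adj_le (w_adj_copy k)
    omega
  refine ⟨{i | ℓ (elt i) ≤ 2}, {i | ℓ (elt i) ≤ 2}ᶜ, Set.union_compl_self _, disjoint_compl_right,
    fun j => ?_⟩
  have hu1 : ℓ u1 = 1 := by
    have := hH j; have := hℓ.adj_le (u1_adj_hyp j).symm; have := hℓ.adj_le u1_adj_v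
    omega
  have hu2 : ℓ u2 = 1 := by
    have := hH j; have := hℓ.adj_le (u2_adj_hyp j).symm; have := hℓ.adj_le u2_adj_v
    omega
  have hq : ℓ qstar = 1 := level_qstar_eq hℓ hu1 hu2 (by omega) (by simp [hH])
  obtain ⟨k, hk⟩ := exists_ne j
  obtain ⟨i, hi, hi₂⟩ := exists_level_elt_eq_level_hyp hℓ hk (by rw [hH, hH])
    (by rw [hq, hH]; decide) (by rw [hu1, hH]; decide) (by rw [hu2, hH]; decide)
    (fun k => by rw [hC, hH]; decide)
  obtain ⟨i', hi', hi'₃⟩ := exists_level_elt_eq_level_copy hℓ hk (by rw [hC, hC])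
    (fun j' => by rw [hC, hH]; decide) (by rw [hw, hC]; decide)
  rw [hH] at hi₂
  rw [hC] at hi'₃
  exact ⟨⟨i, hi₂.le, hi⟩, ⟨i', by simp [hi'₃], hi'⟩⟩

theorem level_elt_ne_four {J : Fin n} (hJ : S J = Set.univ) (hℓ : IsLayering (GQS S) ℓ d)
    (hv : ℓ v = 0) (i : Fin m) : ℓ (elt i) ≠ 4 := by
  intro hi
  have hiJ : i ∈ S J := hJ ▸ Set.mem_univ i
  have hH : ∀ j, ℓ (hyp j) = 2 := fun j => by
    have := hℓ.adj_le (u1_adj_hyp j).symm; have := hℓ.adj_le u1_adj_v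
    have := hℓ.adj_le (elt_adj_copy hiJ); have := hℓ.adj_le (hyp_adj_copy j J).symm
    omega
  have hu1 : ℓ u1 = 1 := by
    have := hH J; have := hℓ.adj_le (u1_adj_hyp J).symm; have := hℓ.adj_le u1_adj_v
    omega
  have hu2 : ℓ u2 = 1 := by
    have := hH J; have := hℓ.adj_le (u2_adj_hyp J).symm; have := hℓ.adj_le u2_adj_v
    omega
  have hq : ℓ qstar = 2 := by
    have := hℓ.adj_le qstar_adj_u1; have := hℓ.adj_le (sub_adj_elt hiJ).symm
    have := hℓ.adj_le (qstar_adj_sub hiJ).symm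
    omega
  have := level_qstar_eq hℓ hu1 hu2 (by omega) (by simp [hH])
  omega

theorem level_qstar_ne_four [Nontrivial (Fin n)] (hℓ : IsLayering (GQS S) ℓ d)
    (hw : ℓ w = 0) : ℓ qstar ≠ 4 := by
  intro hq
  have hu1 := hℓ.adj_le (qstar_adj_u1 (S := S))
  have hu2 := hℓ.adj_le (qstar_adj_u2 (S := S))
  have hC : ∀ k, ℓ (copy k) ≤ 1 := fun k => by
    have := hℓ.adj_le (w_adj_copy k).symm; omega
  have hH : ∀ j, ℓ (hyp j) = 2 := fun j => by
    have := hC j; have := hℓ.adj_le (hyp_adj_copy j j); have := hℓ.adj_le (u1_adj_hyp j)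
    omega
  obtain ⟨j, k, hjk⟩ := exists_pair_ne (Fin n)
  have h := hℓ.eq_of_forall_adj_ne (x := hyp k) (y := hyp j) (fun b hb => ?_) (by rw [hH, hH])
  · exact hjk (by simpa [ext_iff] using h)
  · rw [hH]
    rcases hyp_adj_iff.1 hb with rfl | rfl | ⟨k', rfl⟩ | ⟨i, h, rfl⟩
    · omega
    · omega
    · have := hC k'; omega
    · have := hℓ.adj_le (qstar_adj_sub h); omega

end GQS

theorem stmt_13 {m n : ℕ} (S : Fin n → Set (Fin m)) (hn : 2 ≤ n)
    (hSlast : S ⟨n - 1, by omega⟩ = Set.univ)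
    (h : ContainsAsContraction (GQS S) (SimpleGraph.pathGraph 5)) :
    ∃ Q₁ Q₂ : Set (Fin m), IsTwoColouring S Q₁ Q₂ := by
  have : Nontrivial (Fin n) := Fin.nontrivial_iff_two_le.2 hn
  obtain ⟨ℓ, hℓ⟩ := h.exists_isLayering
  obtain ⟨⟨x, hx⟩⟩ := (hℓ.connected 0 (by norm_num)).nonempty
  obtain ⟨⟨y, hy⟩⟩ := (hℓ.connected 4 le_rfl).nonempty
  have hx : ℓ x = 0 := hx
  have hy : ℓ y = 4 := hy
  rcases GQS.eq_of_four_le_edist hSlast (hℓ.le_edist hx hy) with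
    ⟨rfl, rfl⟩ | ⟨rfl, rfl⟩ | ⟨rfl, i, rfl⟩ | ⟨⟨i, rfl⟩, rfl⟩ | ⟨rfl, rfl⟩ | ⟨rfl, rfl⟩
  · exact GQS.exists_isTwoColouring_of_isLayering hℓ hx hy
  · exact GQS.exists_isTwoColouring_of_isLayering hℓ.reverse (by simp [hy]) (by simp [hx])
  · exact absurd hy (GQS.level_elt_ne_four hSlast hℓ hx i)
  · exact absurd (by simp [hx]) (GQS.level_elt_ne_four hSlast hℓ.reverse (by simp [hy]) i)
  · exact absurd hy (GQS.level_qstar_ne_four hℓ hx)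
  · exact absurd (by simp [hx]) (GQS.level_qstar_ne_four hℓ.reverse (by simp [hy]))
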